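/- arXiv:2105.10458 — 9 statements merged into one kernel-verified Lean document; each statement's English description precedes it below -/
import Mathlib

section
/- Every full-rank lattice L in R^d (d ≥ 2) has a basis x_1,...,x_d all of whose vectors have strictly positive coordinates. -/
/-!
The preimage under `X` of the open positive orthant is an open cone `C`. Rounding a large
multiple of a point of `C` gives an integer vector in `C`, and dividing it by the gcd of its
entries gives a primitive one, `p`. A primitive vector is the first column of some `U ∈ GL_d(ℤ)`,
and since `C` is an open cone containing `p`, adding a large multiple of `p` to every other
column of `U` moves all columns into `C` without changing `det U`.
-/

open Matrix Filter

lemma abs_mulVec_round_sub_le {m n : Type*} [Fintype n] (X : Matrix m n ℝ) (y : n → ℝ) (i : m) :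
    |(X *ᵥ fun k => (round (y k) : ℝ)) i - (X *ᵥ y) i| ≤ ∑ k, |X i k| := by
  simp only [mulVec, dotProduct, ← Finset.sum_sub_distrib, ← mul_sub]
  refine (Finset.abs_sum_le_sum_abs _ _).trans (Finset.sum_le_sum fun k _ => ?_)
  rw [abs_mul, abs_sub_comm]
  exact mul_le_of_le_one_right (abs_nonneg _) ((abs_sub_round _).trans (by norm_num))

lemma exists_int_mulVec_pos {m n : Type*} [Finite m] [Fintype n] (X : Matrix m n ℝ) {y : n → ℝ}
    (hy : ∀ i, 0 < (X *ᵥ y) i) : ∃ z : n → ℤ, ∀ i, 0 < (X *ᵥ fun k => (z k : ℝ)) i := by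
  have hlarge : ∀ᶠ t : ℝ in atTop, ∀ i, ∑ k, |X i k| < (X *ᵥ t • y) i := by
    refine eventually_all.2 fun i => ?_
    simp only [mulVec_smul, Pi.smul_apply, smul_eq_mul]
    exact (tendsto_id.atTop_mul_const (hy i)).eventually_gt_atTop _
  obtain ⟨t, ht⟩ := hlarge.exists
  refine ⟨fun k => round ((t • y) k), fun i => ?_⟩
  have := abs_le.1 (abs_mulVec_round_sub_le X (t • y) i)
  linarith [ht i]

lemma exists_gcd_eq_one_mulVec_pos {m n : Type*} [Nonempty m] [Fintype n] (X : Matrix m n ℝ)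
    {z : n → ℤ} (hz : ∀ i, 0 < (X *ᵥ fun k => (z k : ℝ)) i) :
    ∃ p : n → ℤ, Finset.univ.gcd p = 1 ∧ ∀ i, 0 < (X *ᵥ fun k => (p k : ℝ)) i := by
  have : Nonempty n := by
    by_contra!
    obtain ⟨i⟩ := ‹Nonempty m›
    simpa [mulVec, dotProduct] using hz i
  obtain ⟨p, hzp, hp⟩ := Finset.univ.extract_gcd z Finset.univ_nonempty
  have hg : (0 : ℝ) ≤ ((Finset.univ.gcd z : ℤ) : ℝ) := by
    exact_mod_cast Int.nonneg_of_normalize_eq_self Finset.normalize_gcd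
  have hz_smul : (fun k => (z k : ℝ)) = ((Finset.univ.gcd z : ℤ) : ℝ) • fun k => (p k : ℝ) := by
    ext k
    simp [hzp k (Finset.mem_univ k)]
  refine ⟨p, hp, fun i => pos_of_mul_pos_right ?_ hg⟩
  simpa [hz_smul, mulVec_smul] using hz i

lemma Module.exists_basis_zero_eq_of_apply_eq_one {R M : Type*} [CommRing R] [IsDomain R]
    [IsPrincipalIdealRing R] [AddCommGroup M] [Module R M] [Module.Free R M] [Module.Finite R M]
    {n : ℕ} (hM : Module.finrank R M = n + 1) (f : M →ₗ[R] R) {p : M} (hp : f p = 1) :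
    ∃ B : Module.Basis (Fin (n + 1)) R M, B 0 = p := by
  obtain ⟨k, b⟩ := Submodule.basisOfPid (Module.Free.chooseBasis R M) (LinearMap.ker f)
  have hli : ∀ (c : R), ∀ x ∈ LinearMap.ker f, c • p + x = 0 → c = 0 := by
    intro c x hx hcx
    simpa [LinearMap.mem_ker.1 hx, hp] using congrArg f hcx
  have hsp : ∀ x : M, ∃ c : R, x + c • p ∈ LinearMap.ker f :=
    fun x => ⟨-f x, by simp [hp]⟩
  let B₀ := Module.Basis.mkFinCons p b hli hsp
  have hk : k + 1 = n + 1 := by rw [← hM, Module.finrank_eq_card_basis B₀, Fintype.card_fin]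
  exact ⟨B₀.reindex (finCongr hk), by simp [B₀]⟩

lemma exists_isUnit_det_col_zero_eq_of_gcd_eq_one {n : ℕ} (p : Fin (n + 1) → ℤ)
    (hp : Finset.univ.gcd p = 1) :
    ∃ V : Matrix (Fin (n + 1)) (Fin (n + 1)) ℤ, IsUnit V.det ∧ ∀ i, V i 0 = p i := by
  obtain ⟨c, hc⟩ := Finset.univ.gcd_eq_sum_mul p
  obtain ⟨B, hB⟩ := Module.exists_basis_zero_eq_of_apply_eq_one (n := n) (by simp)
    (dotProductBilin ℤ ℤ c) (p := p) (by rw [hp] at hc; simp [hc, dotProduct, mul_comm])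
  let V := (Pi.basisFun ℤ (Fin (n + 1))).toMatrix B
  have := (Pi.basisFun ℤ (Fin (n + 1))).invertibleToMatrix B
  exact ⟨V, isUnit_det_of_invertible V, fun i => by simp [V, Module.Basis.toMatrix_apply, hB]⟩

lemma exists_int_add_mul_pos {m : Type*} [Finite m] (a : m → ℝ) {b : m → ℝ}
    (hb : ∀ i, 0 < b i) : ∃ N : ℤ, ∀ i, 0 < a i + N * b i := by
  have hlarge : ∀ᶠ N : ℤ in atTop, ∀ i, -a i < N * b i := eventually_all.2 fun i =>
    (tendsto_intCast_atTop_atTop.atTop_mul_const (hb i)).eventually_gt_atTop _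
  obtain ⟨N, hN⟩ := hlarge.exists
  exact ⟨N, fun i => by linarith [hN i]⟩

lemma exists_isUnit_det_mul_map_pos {m ι : Type*} [Finite m] [Fintype ι] [DecidableEq ι]
    (X : Matrix m ι ℝ) {V : Matrix ι ι ℤ} (hV : IsUnit V.det) (j₀ : ι)
    (hV₀ : ∀ i, 0 < (X *ᵥ fun k => (V k j₀ : ℝ)) i) :
    ∃ U : Matrix ι ι ℤ, IsUnit U.det ∧ ∀ i j, 0 < (X * U.map (Int.cast : ℤ → ℝ)) i j := by
  set W := X * V.map (Int.cast : ℤ → ℝ)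
  have hW₀ : ∀ i, 0 < W i j₀ := hV₀
  choose N hN using fun j => exists_int_add_mul_pos (fun i => W i j) hW₀
  -- column `j₀` is left alone, so that `det E = 1 + N₀ j₀ = 1`
  set N₀ := Function.update N j₀ 0
  set E : Matrix ι ι ℤ := 1 + replicateCol Unit (Pi.single j₀ (1 : ℤ)) * replicateRow Unit N₀
  have hE : E.det = 1 := by simp [E, det_one_add_replicateCol_mul_replicateRow, N₀]
  have hVE : ∀ k j, (V * E) k j = V k j + V k j₀ * N₀ j := by
    intro k j
    simp [E, Matrix.mul_apply, mul_add, Finset.sum_add_distrib, one_apply, Pi.single_apply]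
  have hWE : ∀ i j, (X * (V * E).map (Int.cast : ℤ → ℝ)) i j = W i j + N₀ j * W i j₀ := by
    intro i j
    simp only [W, Matrix.mul_apply, Matrix.map_apply, hVE]
    push_cast
    simp only [mul_add, Finset.sum_add_distrib, Finset.mul_sum]
    congr 1
    exact Finset.sum_congr rfl fun k _ => by ring
  refine ⟨V * E, by rw [det_mul, hE, mul_one]; exact hV, fun i j => ?_⟩
  rw [hWE]
  by_cases hj : j = j₀
  · simpa [hj, N₀] using hW₀ i
  · simpa [N₀, hj] using hN j i

theorem positive_basis_exists_general (d : ℕ)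
    (X : Matrix (Fin d) (Fin d) ℝ) (hX : IsUnit X.det) :
    ∃ U : Matrix (Fin d) (Fin d) ℤ, IsUnit U.det ∧
      ∀ i j, 0 < (X * U.map (Int.cast : ℤ → ℝ)) i j := by
  cases d with
  | zero => exact ⟨1, by simp, finZeroElim⟩
  | succ n =>
    have hy : ∀ i, 0 < (X *ᵥ X⁻¹ *ᵥ 1) i := by
      simp [mulVec_mulVec, mul_nonsing_inv X hX]
    obtain ⟨z, hz⟩ := exists_int_mulVec_pos X hy
    obtain ⟨p, hp_gcd, hp⟩ := exists_gcd_eq_one_mulVec_pos X hz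
    obtain ⟨V, hV, hV₀⟩ := exists_isUnit_det_col_zero_eq_of_gcd_eq_one p hp_gcd
    exact exists_isUnit_det_mul_map_pos X hV 0 (by simpa only [hV₀] using hp)

/-- Every full-rank lattice `L = X·ℤ^d` in `ℝ^d` (`d ≥ 2`) has a basis all of whose
vectors have strictly positive coordinates: there is a change of basis matrix
`U ∈ GL_d(ℤ)` such that all entries of `X * U` are positive. -/
theorem positive_basis_exists (d : ℕ) (hd : 2 ≤ d)
    (X : Matrix (Fin d) (Fin d) ℝ) (hX : IsUnit X.det) :
    ∃ U : Matrix (Fin d) (Fin d) ℤ, IsUnit U.det ∧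
      ∀ i j, 0 < (X * U.map (Int.cast : ℤ → ℝ)) i j :=
  positive_basis_exists_general d X hX
end

section
/- Every orbit of GL_d(R) under the action of GL_d(Z) by right multiplication contains a matrix with all positive entries. -/
/-!
The cone `{v | 0 < A *ᵥ v}` is open and nonempty, so rounding a large multiple of `A⁻¹ *ᵥ 1`
gives an integer vector `w` with no zero coordinate and `A *ᵥ w` as large as we like. Take an
integer `c ⊥ w` with no zero coordinate (possible in dimension `≥ 2`). Then
`U = (1 + w cᵀ) * diagonal (sign c)` has determinant `∏ j, sign (c j) = ±1` by the matrix
determinant lemma, and the `j`-th column of `A * U` is `sign (c j) • A e_j + |c j| • A w`,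
which is positive once `A w` dominates the entries of `A`. In dimension `≤ 1` a diagonal sign
matrix does the job.
-/

open Matrix

lemma exists_int_ne_zero_abs_sub_le_one {R : Type*} [Field R] [LinearOrder R]
    [IsStrictOrderedRing R] [FloorRing R] (y : R) : ∃ m : ℤ, m ≠ 0 ∧ |(m : R) - y| ≤ 1 := by
  by_cases h : ⌊y⌋ = 0
  · obtain ⟨hy0, hy1⟩ := Int.floor_eq_zero_iff.mp h
    exact ⟨1, one_ne_zero, abs_le.mpr ⟨by push_cast; linarith, by push_cast; linarith⟩⟩
  · exact ⟨⌊y⌋, h, abs_le.mpr ⟨by linarith [Int.sub_one_lt_floor y], by linarith [Int.floor_le y]⟩⟩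

lemma abs_mulVec_apply_le {R m n : Type*} [Ring R] [LinearOrder R] [IsOrderedRing R]
    [Fintype n] (A : Matrix m n R) {v : n → R} (hv : ∀ j, |v j| ≤ 1) (i : m) :
    |(A *ᵥ v) i| ≤ ∑ j, |A i j| :=
  calc |(A *ᵥ v) i| = |∑ j, A i j * v j| := rfl
    _ ≤ ∑ j, |A i j * v j| := Finset.abs_sum_le_sum_abs _ _
    _ ≤ ∑ j, |A i j| := Finset.sum_le_sum fun j _ => by
        rw [abs_mul]; exact mul_le_of_le_one_right (abs_nonneg _) (hv j)

section

variable {ι R : Type*} [Fintype ι] [DecidableEq ι]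

lemma exists_int_vec_forall_ne_zero_le_mulVec [Field R] [LinearOrder R] [IsStrictOrderedRing R]
    [FloorRing R] (A : Matrix ι ι R) (hA : IsUnit A.det) (M : R) :
    ∃ w : ι → ℤ, (∀ j, w j ≠ 0) ∧ ∀ i, M ≤ (A *ᵥ fun j => (w j : R)) i := by
  obtain ⟨B, hB⟩ := Finite.exists_le fun i => ∑ j, |A i j|
  set x := A⁻¹ *ᵥ 1
  choose w hw0 hw using fun j => exists_int_ne_zero_abs_sub_le_one ((M + B) * x j)
  refine ⟨w, hw0, fun i => ?_⟩
  have hAx : A *ᵥ x = 1 := by rw [mulVec_mulVec, mul_nonsing_inv A hA, one_mulVec]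
  have hsplit : (fun j => (w j : R)) = (M + B) • x + fun j => (w j : R) - (M + B) * x j := by
    funext j; simp
  have herr := (abs_le.mp ((abs_mulVec_apply_le A hw i).trans (hB i))).1
  rw [hsplit, mulVec_add, mulVec_smul, hAx]
  simp only [Pi.add_apply, Pi.smul_apply, Pi.one_apply, smul_eq_mul, mul_one]
  linarith

lemma exists_dotProduct_eq_zero_forall_ne_zero [CommRing R] [LinearOrder R]
    [IsStrictOrderedRing R] [Nontrivial ι] {w : ι → R} (hw : ∀ j, w j ≠ 0) :
    ∃ c : ι → R, c ⬝ᵥ w = 0 ∧ ∀ j, c j ≠ 0 := by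
  obtain ⟨j₀⟩ : Nonempty ι := inferInstance
  refine ⟨(w ⬝ᵥ w) • Pi.single j₀ 1 - w j₀ • w, ?_, fun j => ?_⟩
  · simp only [sub_dotProduct, smul_dotProduct, single_one_dotProduct, smul_eq_mul]
    rw [dotProduct_comm]; ring
  · by_cases hj : j = j₀
    · subst hj
      obtain ⟨k, hk⟩ := exists_ne j
      have hsum : w j * w j + w k * w k ≤ w ⬝ᵥ w :=
        Finset.add_le_sum (fun i _ => mul_self_nonneg (w i)) (Finset.mem_univ j)
          (Finset.mem_univ k) hk.symm
      have hk_pos := mul_self_pos.2 (hw k)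
      simp only [Pi.sub_apply, Pi.smul_apply, Pi.single_eq_same, smul_eq_mul]
      nlinarith
    · simp [hj, hw]

def signedShear (w c : ι → ℤ) : Matrix ι ι ℤ :=
  (1 + vecMulVec w c) * diagonal fun j => (c j).sign

lemma signedShear_apply (w c : ι → ℤ) (k j : ι) :
    signedShear w c k j = (if k = j then (c j).sign else 0) + w k * |c j| := by
  simp only [signedShear, mul_diagonal, Matrix.add_apply, one_apply, vecMulVec_apply,
    ← Int.sign_mul_self_eq_abs]
  split_ifs <;> ring

lemma isUnit_det_signedShear {w c : ι → ℤ} (hcw : c ⬝ᵥ w = 0) (hc : ∀ j, c j ≠ 0) :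
    IsUnit (signedShear w c).det := by
  rw [signedShear, det_mul, vecMulVec_eq Unit, det_one_add_replicateCol_mul_replicateRow, hcw,
    add_zero, one_mul, det_diagonal, IsUnit.prod_univ_iff]
  exact fun j => Int.isUnit_iff_abs_eq.mpr (Int.abs_sign_of_ne_zero (hc j))

lemma mul_map_signedShear_apply {m : Type*} [Ring R] (A : Matrix m ι R) (w c : ι → ℤ) (i : m)
    (j : ι) :
    (A * (signedShear w c).map (Int.cast : ℤ → R)) i j
      = A i j * (c j).sign + (A *ᵥ fun k => (w k : R)) i * |c j| := by
  simp only [mul_apply, map_apply, signedShear_apply, mulVec, dotProduct, Finset.sum_mul,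
    Int.cast_add, Int.cast_mul, Int.cast_ite, Int.cast_zero, mul_add, mul_ite, mul_zero,
    Finset.sum_add_distrib, Finset.sum_ite_eq', Finset.mem_univ, if_true, mul_assoc]

theorem exists_isUnit_det_forall_pos_mul_of_nontrivial [Field R] [LinearOrder R]
    [IsStrictOrderedRing R] [FloorRing R] [Nontrivial ι] (A : Matrix ι ι R) (hA : IsUnit A.det) :
    ∃ U : Matrix ι ι ℤ, IsUnit U.det ∧ ∀ i j, 0 < (A * U.map (Int.cast : ℤ → R)) i j := by
  obtain ⟨B, hB⟩ := Finite.exists_le fun p : ι × ι => |A p.1 p.2|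
  obtain ⟨w, hw0, hAw⟩ := exists_int_vec_forall_ne_zero_le_mulVec A hA (B + 1)
  obtain ⟨c, hcw, hc0⟩ := exists_dotProduct_eq_zero_forall_ne_zero hw0
  refine ⟨signedShear w c, isUnit_det_signedShear hcw hc0, fun i j => ?_⟩
  have hAij : |A i j| ≤ B := hB (i, j)
  have hsign : -|A i j| ≤ A i j * (c j).sign := by
    have : |A i j * ((c j).sign : R)| = |A i j| := by
      rw [abs_mul, ← Int.cast_abs, Int.abs_sign_of_ne_zero (hc0 j), Int.cast_one, mul_one]
    exact this ▸ neg_abs_le _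
  have hc1 : (1 : R) ≤ |c j| := by exact_mod_cast Int.one_le_abs (hc0 j)
  have hdom : (A *ᵥ fun k => (w k : R)) i ≤ (A *ᵥ fun k => (w k : R)) i * |c j| :=
    le_mul_of_one_le_right (by linarith [abs_nonneg (A i j), hAw i]) hc1
  rw [mul_map_signedShear_apply]
  linarith [hAw i]

theorem exists_isUnit_det_forall_pos_mul_of_subsingleton [CommRing R] [LinearOrder R]
    [IsStrictOrderedRing R] [Subsingleton ι] (A : Matrix ι ι R) (hA : IsUnit A.det) :
    ∃ U : Matrix ι ι ℤ, IsUnit U.det ∧ ∀ i j, 0 < (A * U.map (Int.cast : ℤ → R)) i j := by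
  refine ⟨diagonal fun j => if 0 < A j j then 1 else -1, ?_, fun i j => ?_⟩
  · rw [det_diagonal, IsUnit.prod_univ_iff]
    intro j; split_ifs <;> simp
  · obtain rfl := Subsingleton.elim i j
    have hAii : A i i ≠ 0 := det_eq_elem_of_subsingleton A i ▸ hA.ne_zero
    rw [diagonal_map Int.cast_zero, mul_diagonal]
    split_ifs with h
    · simpa using h
    · simpa using lt_of_le_of_ne (not_lt.mp h) hAii

end

/-- Every orbit of `GL_d(ℝ)` under the right-multiplication action of `GL_d(ℤ)`
contains a matrix with all positive entries. -/
theorem orbit_contains_positive_matrix (d : ℕ)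
    (A : Matrix (Fin d) (Fin d) ℝ) (hA : IsUnit A.det) :
    ∃ U : Matrix (Fin d) (Fin d) ℤ, IsUnit U.det ∧
      ∀ i j, 0 < (A * U.map (Int.cast : ℤ → ℝ)) i j := by
  rcases subsingleton_or_nontrivial (Fin d) with _ | _
  · exact exists_isUnit_det_forall_pos_mul_of_subsingleton A hA
  · exact exists_isUnit_det_forall_pos_mul_of_nontrivial A hA
end

section
/- Let X be a positive basis of a full-rank lattice L ⊂ R^d and y ∈ L⁺ = L ∩ R^d_{≥0}. If y ∈ S(X) and y = m·z for some z ∈ L⁺ and positive integer m, then z ∈ S(X); conversely if z ∈ S(X) then m·z ∈ S(X). Hence the set of gaps G(X) = L⁺ \ S(X) is closed under multiplication by positive integers, and every gap is a positive integer multiple of a primitive gap. -/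
lemma coeff_unique_int (d : ℕ) (x : Fin d → Fin d → ℝ)
    (hli : LinearIndependent ℝ x) (a b : Fin d → ℤ)
    (h : ∑ i, (a i : ℝ) • x i = ∑ i, (b i : ℝ) • x i) : a = b := by
  have h0 : ∑ i, ((a i - b i : ℤ) : ℝ) • x i = 0 := by
    push_cast
    simp [sub_smul, Finset.sum_sub_distrib, h]
  have := Fintype.linearIndependent_iff.mp hli (fun i => ((a i - b i : ℤ) : ℝ)) h0
  funext i
  have hi := this i
  have : ((a i - b i : ℤ) : ℝ) = 0 := hi
  have : (a i - b i : ℤ) = 0 := by exact_mod_cast this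
  omega

/-- Let `X` be a positive basis of a full-rank lattice `L ⊂ ℝ^d` and `L⁺ = L ∩ ℝ^d_{≥0}`.
For `z ∈ L⁺` and a positive integer `m`, `m • z ∈ S(X) ↔ z ∈ S(X)`; hence the set of gaps
`G(X) = L⁺ \ S(X)` is closed under multiplication by positive integers and every gap is a
positive integer multiple of a primitive gap. -/
theorem gaps_multiples (d : ℕ) (x : Fin d → Fin d → ℝ)
    (hli : LinearIndependent ℝ x) (hpos : ∀ i j, 0 ≤ x i j) :
    let L : Set (Fin d → ℝ) := {v | ∃ a : Fin d → ℤ, v = ∑ i, (a i : ℝ) • x i}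
    let S : Set (Fin d → ℝ) := {v | ∃ a : Fin d → ℕ, v = ∑ i, (a i : ℝ) • x i}
    let Lplus : Set (Fin d → ℝ) := {v ∈ L | ∀ i, 0 ≤ v i}
    (∀ z ∈ Lplus, ∀ m : ℕ, 0 < m → (((m : ℝ) • z ∈ S) ↔ z ∈ S)) ∧
      (∀ y ∈ Lplus \ S, ∃ z ∈ Lplus \ S,
        (∀ w ∈ L, ∀ k : ℤ, 1 < k → z ≠ (k : ℝ) • w) ∧ ∃ m : ℕ, 0 < m ∧ y = (m : ℝ) • z) := by
  intro L S Lplus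
  -- key fact: scaling a combination
  have key : ∀ (m : ℤ) (a : Fin d → ℤ),
      (m : ℝ) • (∑ i, (a i : ℝ) • x i) = ∑ i, ((m * a i : ℤ) : ℝ) • x i := by
    intro m a
    rw [Finset.smul_sum]
    congr 1; funext i
    rw [smul_smul]; push_cast; ring
  have part1 : ∀ z ∈ Lplus, ∀ m : ℕ, 0 < m → (((m : ℝ) • z ∈ S) ↔ z ∈ S) := by
    intro z hz m hm
    obtain ⟨⟨a, ha⟩, hznn⟩ := hz
    constructor
    · rintro ⟨b, hb⟩
      have hb' : (((m : ℤ) : ℝ)) • z = ∑ i, (((b i : ℤ)) : ℝ) • x i := by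
        push_cast at hb ⊢; exact hb
      have h1 : ∑ i, (((m : ℤ) * a i : ℤ) : ℝ) • x i = ∑ i, (((b i : ℤ) : ℤ) : ℝ) • x i := by
        rw [← key (m : ℤ) a, ← ha]; exact_mod_cast hb'
      have h2 := coeff_unique_int d x hli (fun i => (m : ℤ) * a i) (fun i => (b i : ℤ)) h1
      have hanonneg : ∀ i, 0 ≤ a i := by
        intro i
        have : (m : ℤ) * a i = (b i : ℤ) := congrFun h2 i
        nlinarith [Int.natCast_nonneg (b i), (by exact_mod_cast hm : (0:ℤ) < (m:ℤ))]
      refine ⟨fun i => (a i).toNat, ?_⟩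
      rw [ha]
      congr 1; funext i
      congr 1
      exact_mod_cast (Int.toNat_of_nonneg (hanonneg i)).symm
    · rintro ⟨b, hb⟩
      refine ⟨fun i => m * b i, ?_⟩
      rw [hb, Finset.smul_sum]
      congr 1; funext i
      rw [smul_smul]; push_cast; ring
  refine ⟨part1, ?_⟩
  rintro y ⟨⟨⟨a, ha⟩, hynn⟩, hyS⟩
  have hane : a ≠ 0 := by
    rintro rfl
    exact hyS ⟨0, by simpa using ha⟩
  set g : ℤ := Finset.univ.gcd a with hg
  have hgnn : 0 ≤ g := Int.nonneg_of_normalize_eq_self (Finset.normalize_gcd)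
  have hgne : g ≠ 0 := by
    intro h0
    apply hane
    funext i
    exact Finset.gcd_eq_zero_iff.mp h0 i (Finset.mem_univ i)
  have hgpos : 0 < g := lt_of_le_of_ne hgnn (Ne.symm hgne)
  have hdvd : ∀ i, g ∣ a i := fun i => Finset.gcd_dvd (Finset.mem_univ i)
  set c : Fin d → ℤ := fun i => a i / g with hc
  have hac : ∀ i, a i = g * c i := fun i => (Int.mul_ediv_cancel' (hdvd i)).symm
  set z : Fin d → ℝ := ∑ i, ((c i : ℤ) : ℝ) • x i with hzdef
  have hyz : y = (g : ℝ) • z := by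
    rw [ha, hzdef, key g c]
    congr 1; funext i
    congr 2
    exact hac i
  have hzL : z ∈ L := ⟨c, rfl⟩
  have hznn : ∀ i, 0 ≤ z i := by
    intro i
    have h1 := hynn i
    rw [hyz] at h1
    have h2 : (0:ℝ) < (g:ℝ) := by exact_mod_cast hgpos
    have : ((g:ℝ) • z) i = (g:ℝ) * z i := rfl
    rw [this] at h1
    nlinarith
  have hzLplus : z ∈ Lplus := ⟨hzL, hznn⟩
  have hzS : z ∉ S := by
    intro hzS
    apply hyS
    rw [hyz]
    have := (part1 z hzLplus g.toNat (by omega)).mpr hzS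
    have hcast : ((g.toNat : ℕ) : ℝ) = (g : ℝ) := by
      exact_mod_cast congrArg (Int.cast : ℤ → ℝ) (Int.toNat_of_nonneg hgnn)
    rwa [hcast] at this
  refine ⟨z, ⟨hzLplus, hzS⟩, ?_, g.toNat, by omega, ?_⟩
  · rintro w ⟨b, hb⟩ k hk hzw
    rw [hzdef, hb, key k b] at hzw
    have h2 := coeff_unique_int d x hli c (fun i => k * b i) hzw
    have hdvd2 : g * k ∣ g := by
      apply Finset.dvd_gcd
      intro i _
      rw [hac i, congrFun h2 i]
      exact ⟨b i, by ring⟩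
    have := Int.le_of_dvd hgpos hdvd2
    nlinarith
  · rw [hyz]
    congr 1
    exact_mod_cast congrArg (Int.cast : ℤ → ℝ) (Int.toNat_of_nonneg hgnn).symm
end

section
/- If X is a positive basis of a full-rank lattice L ⊂ R^d that is not orthogonal (not all vectors of X are multiples of standard basis vectors), then the set of primitive gaps G_pr(X) = {y ∈ L⁺ \ S(X) : y primitive in L} is infinite. -/
open Finset

/-- If `X` is a positive basis of a full-rank lattice `L ⊂ ℝ^d` which is not orthogonal
(not every basis vector is a multiple of a standard basis vector), then the set of
primitive gaps `G_pr(X) = {y ∈ L⁺ \ S(X) : y primitive in L}` is infinite. -/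
theorem primitive_gaps_infinite (d : ℕ) (x : Fin d → Fin d → ℝ)
    (hli : LinearIndependent ℝ x) (hpos : ∀ i j, 0 ≤ x i j)
    (hnotorth : ¬ ∀ i, ∃ j, ∃ c : ℝ, x i = c • (Pi.single j 1 : Fin d → ℝ)) :
    let L : Set (Fin d → ℝ) := {v | ∃ a : Fin d → ℤ, v = ∑ i, (a i : ℝ) • x i}
    let S : Set (Fin d → ℝ) := {v | ∃ a : Fin d → ℕ, v = ∑ i, (a i : ℝ) • x i}
    Set.Infinite {y : Fin d → ℝ | (y ∈ L ∧ ∀ i, 0 ≤ y i) ∧ y ∉ S ∧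
      ∀ w ∈ L, ∀ k : ℤ, 1 < k → y ≠ (k : ℝ) • w} := by
  intro L S
  -- uniqueness of coefficients
  have coeff_unique : ∀ a b : Fin d → ℝ,
      (∑ i, a i • x i) = ∑ i, b i • x i → a = b := by
    intro a b hab
    have h0 : ∑ i, (a i - b i) • x i = 0 := by
      simp [sub_smul, Finset.sum_sub_distrib, hab]
    have h1 := Fintype.linearIndependent_iff.mp hli _ h0
    funext i
    have := h1 i
    linarith
  have eval : ∀ (c : Fin d → ℝ) j, (∑ i, c i • x i) j = ∑ i, c i * x i j := by
    intro c j
    simp [Finset.sum_apply]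
  -- i₀ with two positive coordinates
  push_neg at hnotorth
  obtain ⟨i₀, hi₀⟩ := hnotorth
  have hne0 : x i₀ ≠ 0 := by
    intro h
    exact hli.ne_zero i₀ h
  obtain ⟨j₁, j₂, hj12, hxj₁, hxj₂⟩ :
      ∃ j₁ j₂, j₁ ≠ j₂ ∧ x i₀ j₁ ≠ 0 ∧ x i₀ j₂ ≠ 0 := by
    by_contra h
    push_neg at h
    obtain ⟨j₁, hj₁⟩ : ∃ j, x i₀ j ≠ 0 := by
      by_contra h'
      push_neg at h'
      exact hne0 (funext h')
    refine hi₀ j₁ (x i₀ j₁) ?_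
    funext j
    by_cases hj : j = j₁
    · subst hj; simp
    · have := h j₁ j (Ne.symm hj) hj₁
      simp [this, Pi.single_apply, hj]
  haveI : Nontrivial (Fin d) := ⟨⟨j₁, j₂, hj12⟩⟩
  -- every standard vector is in span: each coordinate has some positive entry
  have hspan : ∀ j, ∃ i, x i j ≠ 0 := by
    intro j
    by_contra h
    push_neg at h
    have hcard : Fintype.card (Fin d) = Module.finrank ℝ (Fin d → ℝ) := by
      simp [Module.finrank_fin_fun]
    let b := basisOfLinearIndependentOfCardEqFinrank hli hcard
    have hb : ∀ i, b i = x i := fun i => by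
      simp [b, coe_basisOfLinearIndependentOfCardEqFinrank]
    have hrep := b.sum_repr (Pi.single j (1 : ℝ))
    have := congrFun hrep j
    simp only [Finset.sum_apply, Pi.smul_apply, smul_eq_mul] at this
    simp only [hb, h, mul_zero, Finset.sum_const_zero, Pi.single_eq_same] at this
    exact one_ne_zero this.symm
  -- there is an index i₁ whose support is covered by the other vectors
  obtain ⟨i₁, hi₁⟩ : ∃ i₁, ∀ j, x i₁ j ≠ 0 → ∃ i, i ≠ i₁ ∧ x i j ≠ 0 := by
    by_contra h
    push_neg at h
    choose jm hjm1 hjm2 using h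
    have hinj : Function.Injective jm := by
      intro i i' hii'
      by_contra hne
      have := hjm2 i' i hne
      rw [← hii'] at this
      exact hjm1 i this
    have hsurj : Function.Surjective jm := Finite.surjective_of_injective hinj
    obtain ⟨ia, hia⟩ := hsurj j₁
    obtain ⟨ib, hib⟩ := hsurj j₂
    have h1 : ia = i₀ := by
      by_contra hne
      have := hjm2 ia i₀ (Ne.symm hne)
      rw [hia] at this
      exact hxj₁ this
    have h2 : ib = i₀ := by
      by_contra hne
      have := hjm2 ib i₀ (Ne.symm hne)
      rw [hib] at this
      exact hxj₂ this
    exact hj12 (hia ▸ hib ▸ (h1.trans h2.symm) ▸ rfl)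
  -- the sums over the complement of i₁
  set t : Fin d → ℝ := fun j => ∑ i ∈ Finset.univ.erase i₁, x i j with ht
  have htnn : ∀ j, 0 ≤ t j := fun j =>
    Finset.sum_nonneg fun i _ => hpos i j
  have htpos : ∀ j, x i₁ j ≠ 0 → 0 < t j := by
    intro j hj
    obtain ⟨i, hii₁, hix⟩ := hi₁ j hj
    have h1 : 0 < x i j := lt_of_le_of_ne (hpos i j) (Ne.symm hix)
    have h2 : x i j ≤ t j :=
      Finset.single_le_sum (fun i _ => hpos i j)
        (Finset.mem_erase.mpr ⟨hii₁, Finset.mem_univ i⟩)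
    linarith
  -- the bound N₀
  set N₀ : ℕ := Finset.univ.sup (fun j => ⌈x i₁ j / t j⌉₊) with hN₀
  have hbound : ∀ N : ℕ, N₀ ≤ N → ∀ j, x i₁ j ≤ N * t j := by
    intro N hN j
    by_cases hj : x i₁ j = 0
    · rw [hj]
      exact mul_nonneg (by positivity) (htnn j)
    · have htj := htpos j hj
      have h1 : x i₁ j / t j ≤ ⌈x i₁ j / t j⌉₊ := Nat.le_ceil _
      have h2 : (⌈x i₁ j / t j⌉₊ : ℝ) ≤ N := by
        have := le_trans (Finset.le_sup (Finset.mem_univ j)) hN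
        exact_mod_cast this
      rw [div_le_iff₀ htj] at h1
      nlinarith [htnn j]
  -- the family of gaps
  set A : ℕ → Fin d → ℤ := fun N i => if i = i₁ then -1 else N with hA
  set f : ℕ → Fin d → ℝ := fun n => ∑ i, ((A (N₀ + n + 1) i : ℝ)) • x i with hf
  have hfeval : ∀ n j, f n j = (N₀ + n + 1 : ℕ) * t j - x i₁ j := by
    intro n j
    rw [hf]
    simp only
    rw [eval]
    rw [← Finset.add_sum_erase _ _ (Finset.mem_univ i₁)]
    have : ∀ i ∈ Finset.univ.erase i₁, ((A (N₀ + n + 1) i : ℝ)) * x i j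
        = ((N₀ + n + 1 : ℕ) : ℝ) * x i j := by
      intro i hi
      rw [hA]
      simp only [(Finset.mem_erase.mp hi).1, if_false]
      push_cast
      ring
    rw [Finset.sum_congr rfl this, ← Finset.mul_sum, ht]
    simp [hA]
    ring
  have hAcoeff : ∀ n, f n = ∑ i, ((A (N₀ + n + 1) i : ℝ)) • x i := fun n => rfl
  -- injectivity
  obtain ⟨i₂, hi₂⟩ := exists_ne i₁
  have hinj : Function.Injective f := by
    intro n m hnm
    have := coeff_unique _ _ hnm
    have h2 := congrFun this i₂
    simp only [hA, hi₂, if_false] at h2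
    have : (N₀ + n + 1 : ℤ) = (N₀ + m + 1 : ℤ) := by exact_mod_cast h2
    omega
  refine Set.infinite_of_injective_forall_mem hinj ?_
  intro n
  refine ⟨⟨⟨A (N₀ + n + 1), rfl⟩, ?_⟩, ?_, ?_⟩
  · intro j
    rw [hfeval]
    have := hbound (N₀ + n + 1) (by omega) j
    linarith
  · rintro ⟨b, hb⟩
    have := coeff_unique _ _ (hb ▸ hAcoeff n)
    have h2 := congrFun this i₁
    simp only [hA, if_pos rfl] at h2
    have h3 : ((b i₁ : ℤ)) = -1 := by exact_mod_cast h2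
    omega
  · rintro w ⟨c, hc⟩ k hk hykw
    have hcoef : f n = ∑ i, ((k * c i : ℤ) : ℝ) • x i := by
      rw [hykw, hc, Finset.smul_sum]
      congr 1
      funext i
      push_cast
      rw [smul_smul]
    have := coeff_unique _ _ ((hAcoeff n).symm.trans hcoef)
    have h2 := congrFun this i₁
    simp only [hA, if_pos rfl] at h2
    have h3 : (-1 : ℤ) = k * c i₁ := by exact_mod_cast h2
    have hdvd : k ∣ (-1 : ℤ) := Dvd.intro _ h3.symm
    have := Int.le_of_dvd (by norm_num) ((dvd_neg.mp hdvd))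
    omega
end

section
/- Let X = {x_1,...,x_d} be a positive non-orthogonal basis for a full-rank lattice L ⊂ R^d. Then for every proper subset Z ⊊ Z of the integers, L⁺ is not contained in the set S(X,Z) = {Σ a_i x_i : a_1,...,a_d ∈ Z}. -/
private lemma coeff_unique {d : ℕ} {x : Fin d → Fin d → ℝ}
    (hli : LinearIndependent ℝ x) {a b : Fin d → ℤ}
    (h : ∑ i, (a i : ℝ) • x i = ∑ i, (b i : ℝ) • x i) : a = b := by
  have key : ∀ i, ((a i : ℝ) - (b i : ℝ)) = 0 := by
    apply Fintype.linearIndependent_iff.mp hli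
    have : ∑ i, ((a i : ℝ) - (b i : ℝ)) • x i
        = (∑ i, (a i : ℝ) • x i) - ∑ i, (b i : ℝ) • x i := by
      rw [← Finset.sum_sub_distrib]
      exact Finset.sum_congr rfl fun i _ => (sub_smul _ _ _)
    rw [this, h, sub_self]
  funext i
  have := sub_eq_zero.mp (key i)
  exact_mod_cast this

/-- If `X` is a positive non-orthogonal basis of a full-rank lattice `L ⊂ ℝ^d`, then
`L⁺ = L ∩ ℝ^d_{≥0}` is not contained in any set `S(X,Z)` of integer combinations of the
`x_i` with all coefficients restricted to a proper subset `Z ⊊ ℤ`. -/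
theorem not_contained_restricted_coeffs (d : ℕ) (x : Fin d → Fin d → ℝ)
    (hli : LinearIndependent ℝ x) (hpos : ∀ i j, 0 ≤ x i j)
    (hnotorth : ¬ ∀ i, ∃ j, ∃ c : ℝ, x i = c • (Pi.single j 1 : Fin d → ℝ))
    (Z : Set ℤ) (hZ : Z ≠ Set.univ) :
    ¬ ({v : Fin d → ℝ | (∃ a : Fin d → ℤ, v = ∑ i, (a i : ℝ) • x i) ∧ ∀ i, 0 ≤ v i}
        ⊆ {v : Fin d → ℝ | ∃ a : Fin d → ℤ, (∀ i, a i ∈ Z) ∧ v = ∑ i, (a i : ℝ) • x i}) := by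
  -- d = 0 is impossible
  rcases Nat.eq_zero_or_pos d with hd | hd
  · subst hd
    exact absurd (fun i => i.elim0) hnotorth
  obtain ⟨m, hm⟩ := (Set.ne_univ_iff_exists_notMem Z).mp hZ
  -- generic final step: a positive vector with coefficient m at index k contradicts containment
  have finish : ∀ (k : Fin d) (a : Fin d → ℤ), a k = m →
      (∀ j, 0 ≤ ∑ i, (a i : ℝ) * x i j) →
      ¬ ({v : Fin d → ℝ | (∃ a : Fin d → ℤ, v = ∑ i, (a i : ℝ) • x i) ∧ ∀ i, 0 ≤ v i}
        ⊆ {v : Fin d → ℝ | ∃ a : Fin d → ℤ, (∀ i, a i ∈ Z) ∧ v = ∑ i, (a i : ℝ) • x i}) := by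
    intro k a hak hge hsub
    have hmem : (∑ i, (a i : ℝ) • x i) ∈
        {v : Fin d → ℝ | (∃ a : Fin d → ℤ, v = ∑ i, (a i : ℝ) • x i) ∧ ∀ i, 0 ≤ v i} := by
      refine ⟨⟨a, rfl⟩, fun j => ?_⟩
      have := hge j
      simpa [Finset.sum_apply] using this
    obtain ⟨b, hbZ, hb⟩ := hsub hmem
    have hab : a = b := coeff_unique hli hb
    have : m ∈ Z := by have h := hbZ k; rwa [← hab, hak] at h
    exact hm this
  rcases le_or_gt 0 m with hm0 | hm0
  · -- m ≥ 0 : use v = m • x k for any k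
    set k : Fin d := ⟨0, hd⟩
    refine finish k (fun i => if i = k then m else 0) (by simp) fun j => ?_
    apply Finset.sum_nonneg
    intro i _
    by_cases hik : i = k
    · simp only [if_pos hik]
      exact mul_nonneg (by exact_mod_cast hm0) (hpos i j)
    · simp [hik]
  · -- m < 0
    by_cases hA : ∃ k, ∀ j, x k j ≠ 0 → ∃ i, i ≠ k ∧ x i j ≠ 0
    · obtain ⟨k, hk⟩ := hA
      -- choose a large N
      have hsel : ∀ j : Fin d, ∃ n : ℕ,
          (-m : ℝ) * x k j / (∑ i ∈ Finset.univ.erase k, x i j) ≤ n := fun j =>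
        exists_nat_ge _
      choose n hn using hsel
      set N : ℕ := Finset.univ.sup n with hN
      refine finish k (fun i => if i = k then m else (N : ℤ)) (by simp) fun j => ?_
      have hcast : ∀ i : Fin d, (((if i = k then m else (N : ℤ)) : ℤ) : ℝ)
          = ((if i = k then m else (N : ℤ)) : ℝ) := fun i => by split <;> simp
      simp only [hcast]
      have hsplit : ∑ i, ((if i = k then m else (N : ℤ)) : ℝ) * x i j
          = (m : ℝ) * x k j + (((N : ℤ)) : ℝ) * ∑ i ∈ Finset.univ.erase k, x i j := by
        rw [← Finset.add_sum_erase _ _ (Finset.mem_univ k), Finset.mul_sum]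
        simp only [if_pos rfl]
        congr 1
        refine Finset.sum_congr rfl fun i hi => ?_
        rw [if_neg (Finset.ne_of_mem_erase hi)]
      rw [hsplit]
      set s : ℝ := ∑ i ∈ Finset.univ.erase k, x i j with hs
      have hsnn : 0 ≤ s := Finset.sum_nonneg fun i _ => hpos i j
      by_cases hx : x k j = 0
      · rw [hx]
        have h0 : (0:ℝ) ≤ (((N : ℤ)) : ℝ) * s := mul_nonneg (by positivity) hsnn
        linarith
      · -- x k j > 0, and s > 0 by non-privacy
        have hxpos : 0 < x k j := lt_of_le_of_ne (hpos k j) (Ne.symm hx)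
        obtain ⟨i, hik, hxi⟩ := hk j hx
        have hspos : 0 < s := by
          have hmem : i ∈ Finset.univ.erase k := Finset.mem_erase.mpr ⟨hik, Finset.mem_univ i⟩
          have h1 : x i j ≤ s := Finset.single_le_sum (fun t _ => hpos t j) hmem
          exact lt_of_lt_of_le (lt_of_le_of_ne (hpos i j) (Ne.symm hxi)) h1
        have hnj : (-m : ℝ) * x k j / s ≤ (N : ℝ) := by
          refine le_trans (hn j) ?_
          exact_mod_cast Finset.le_sup (f := n) (Finset.mem_univ j)
        have : (-m : ℝ) * x k j ≤ (N : ℝ) * s := by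
          rw [div_le_iff₀ hspos] at hnj
          linarith
        push_cast
        push_cast at this
        linarith
    · -- every k has a private coordinate: contradiction with hnotorth
      exfalso
      push_neg at hA
      choose f hf1 hf2 using hA
      have hfinj : Function.Injective f := by
        intro k k' hkk'
        by_contra hne
        have h1 : x k' (f k) = 0 := hf2 k k' (Ne.symm hne)
        rw [hkk'] at h1
        exact hf1 k' h1
      have hfsurj : Function.Surjective f := Finite.surjective_of_injective hfinj
      apply hnotorth
      intro i
      refine ⟨f i, x i (f i), ?_⟩
      funext j
      by_cases hj : j = f i
      · subst hj
        simp [Pi.single_eq_same]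
      · obtain ⟨k, hk⟩ := hfsurj j
        have hki : i ≠ k := fun h => hj (by rw [h, hk])
        have : x i j = 0 := by
          rw [← hk]
          exact hf2 k i hki
        rw [this]
        simp [Pi.single_eq_of_ne hj]
end

section
/- Let L ⊂ R^d be a full-rank lattice with covering radius μ(L) (with respect to the Euclidean ball). Then there exists y ∈ L with 1 ≤ y_i ≤ 2μ(L)+1 for every coordinate i. In particular, λ_1(L⁺) ≤ 2μ(L)+1, where λ_1(L⁺) is the smallest sup-norm of a nonzero vector of L lying in the nonnegative orthant. -/
lemma coord_le_sqrt_sum {d : ℕ} (v : Fin d → ℝ) (i : Fin d) :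
    |v i| ≤ Real.sqrt (∑ j, v j ^ 2) := by
  rw [← Real.sqrt_sq_eq_abs]
  apply Real.sqrt_le_sqrt
  exact Finset.single_le_sum (fun j _ => sq_nonneg (v j)) (Finset.mem_univ i)

/-- Let `L = B·ℤ^d ⊂ ℝ^d` be a full-rank lattice and `μ` a covering radius of `L` for the
Euclidean distance. Then there is a lattice point `y` with `1 ≤ y_i ≤ 2μ+1` for every
coordinate `i`; in particular there is a nonzero lattice point in the nonnegative orthant
of sup-norm at most `2μ+1`, i.e. `λ_1(L⁺) ≤ 2μ+1`. -/
theorem lattice_point_in_positive_cube (d : ℕ) (hd : 0 < d)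
    (B : Matrix (Fin d) (Fin d) ℝ) (hB : IsUnit B.det) (μ : ℝ)
    (hcov : ∀ p : Fin d → ℝ, ∃ a : Fin d → ℤ,
      Real.sqrt (∑ i, (p i - B.mulVec (fun j => (a j : ℝ)) i) ^ 2) ≤ μ) :
    (∃ a : Fin d → ℤ, ∀ i, 1 ≤ B.mulVec (fun j => (a j : ℝ)) i ∧
        B.mulVec (fun j => (a j : ℝ)) i ≤ 2 * μ + 1) ∧
      ∃ y : Fin d → ℝ, (∃ a : Fin d → ℤ, y = B.mulVec (fun j => (a j : ℝ))) ∧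
        y ≠ 0 ∧ (∀ i, 0 ≤ y i) ∧ ‖y‖ ≤ 2 * μ + 1 := by
  obtain ⟨a, ha⟩ := hcov (fun _ => μ + 1)
  set y : Fin d → ℝ := B.mulVec (fun j => (a j : ℝ)) with hy
  have hμ0 : 0 ≤ μ := le_trans (Real.sqrt_nonneg _) ha
  have hbound : ∀ i, 1 ≤ y i ∧ y i ≤ 2 * μ + 1 := by
    intro i
    have h1 : |(μ + 1) - y i| ≤ μ :=
      le_trans (coord_le_sqrt_sum (fun i => (μ + 1) - y i) i) ha
    rw [abs_le] at h1
    constructor <;> linarith [h1.1, h1.2]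
  refine ⟨⟨a, hbound⟩, y, ⟨a, rfl⟩, ?_, fun i => le_trans zero_le_one (hbound i).1, ?_⟩
  · intro h0
    have := (hbound ⟨0, hd⟩).1
    rw [h0] at this
    simp at this
    linarith
  · apply pi_norm_le_iff_of_nonneg (by linarith) |>.2
    intro i
    rw [Real.norm_eq_abs, abs_le]
    exact ⟨by linarith [(hbound i).1], (hbound i).2⟩
end

section
/- Let X = {x_1,...,x_d} be a positive basis of a full-rank lattice L ⊂ R^d such that no d−1 elements of X lie in a coordinate hyperplane and X is not orthogonal. Then there exist linearly independent primitive gaps z_1,...,z_d ∈ G_pr(X), given by z_i = a_i·Σ_{j≠i} x_j − x_i with a_i = max_k ⌊x_{ik} / Σ_{j≠i} x_{jk}⌋ + 1, whose sup-norms satisfy |z_i| = max_m { a_i·Σ_{j≠i} x_{jm} − x_{im} }. -/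
/-!
In the basis `x`, the vector `z i` has coordinate `-1` at `i` and `a i` elsewhere. The `-1`
shows at once that `z i` is neither a nonnegative integer combination of the `x j` nor a
proper multiple of a lattice vector. The choice of `a i` makes `a i • ∑_{j ≠ i} x j` exceed
`x i` in every coordinate, so `z i > 0` and its sup-norm is its largest coordinate. The
coefficient matrix `a 𝟙ᵀ - diag (a + 1)` is singular only when `∑ a i / (a i + 1) = 1`; as
`a i ≥ 1` this forces `d = 2` and `a = 1`, i.e. `x 0 < x 1 < x 0` coordinatewise.
-/

open Finset

section Floor

variable {κ α : Type*} [Finite κ] [Ring α] [LinearOrder α] [FloorRing α]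

theorem one_le_ciSup_floor_add_one (r : κ → α) (k : κ) (hk : 0 ≤ r k) :
    1 ≤ (⨆ k, ⌊r k⌋) + 1 := by
  have := le_ciSup (f := fun k => ⌊r k⌋) (Set.finite_range _).bddAbove k
  have := Int.floor_nonneg.mpr hk
  omega

theorem lt_ciSup_floor_add_one [IsStrictOrderedRing α] (r : κ → α) (k : κ) :
    r k < ((⨆ k, ⌊r k⌋) + 1 : ℤ) := by
  have := le_ciSup (f := fun k => ⌊r k⌋) (Set.finite_range _).bddAbove k
  exact (Int.lt_floor_add_one _).trans_le (by push_cast; gcongr)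

end Floor

variable {ι : Type*} [Fintype ι]

theorem LinearIndependent.sum_smul_of_rows {K M : Type*} [Ring K] [AddCommGroup M] [Module K M]
    {x : ι → M} (hx : LinearIndependent K x) {B : ι → ι → K} (hB : LinearIndependent K B) :
    LinearIndependent K fun i => ∑ j, B i j • x j :=
  hB.map' (Fintype.linearCombination K x)
    (LinearMap.ker_eq_bot.mpr hx.fintypeLinearCombination_injective)

theorem pi_norm_eq_ciSup_of_nonneg [Nonempty ι] {v : ι → ℝ} (hv : 0 ≤ v) : ‖v‖ = ⨆ m, v m := by
  have hbdd : BddAbove (Set.range v) := (Set.finite_range v).bddAbove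
  refine le_antisymm ((pi_norm_le_iff_of_nonempty _).2 fun m => ?_) (ciSup_le fun m => ?_)
  · rw [Real.norm_of_nonneg (hv m)]; exact le_ciSup hbdd m
  · exact (le_abs_self _).trans (norm_le_pi_norm v m)

section Gaps

variable {K M : Type*} [Ring K] [AddCommGroup M] [Module K M] {x : ι → M}

theorem sum_intCast_smul_ne_sum_natCast_smul [LinearOrder K] [IsStrictOrderedRing K]
    (hx : LinearIndependent K x) {c : ι → ℤ} {i : ι} (hci : c i < 0) (n : ι → ℕ) :
    ∑ j, (c j : K) • x j ≠ ∑ j, (n j : K) • x j := by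
  intro h
  have : ((c i : ℤ) : K) = ((n i : ℤ) : K) := by
    simpa using Fintype.linearIndependent_iffₛ.mp hx _ _ h i
  have := Int.cast_injective this
  omega

theorem isUnit_of_sum_intCast_smul_eq_smul [CharZero K] (hx : LinearIndependent K x) {c : ι → ℤ}
    {i : ι} (hci : IsUnit (c i)) (w : ι → ℤ) (m : ℤ)
    (h : ∑ j, (c j : K) • x j = (m : K) • ∑ j, (w j : K) • x j) : IsUnit m := by
  rw [smul_sum] at h
  simp_rw [smul_smul, ← Int.cast_mul] at h
  have : c i = m * w i := by exact_mod_cast Fintype.linearIndependent_iffₛ.mp hx _ _ h i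
  exact isUnit_of_mul_isUnit_left (this ▸ hci)

end Gaps

theorem card_eq_two_and_eq_one_of_sum_div_add_one_eq_one {c : ι → ℝ} (hc : ∀ i, 1 ≤ c i)
    (hsum : ∑ i, c i / (c i + 1) = 1) : Fintype.card ι = 2 ∧ ∀ i, c i = 1 := by
  have hpos : ∀ i, 0 < c i + 1 := fun i => by linarith [hc i]
  have hhalf : ∀ i, 0 ≤ c i / (c i + 1) - 1 / 2 := fun i => by
    rw [sub_nonneg, div_le_div_iff₀ two_pos (hpos i)]; linarith [hc i]
  have hlt : ∀ i, c i / (c i + 1) < 1 := fun i => (div_lt_one (hpos i)).mpr (lt_add_one _)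
  have hle : (Fintype.card ι : ℝ) ≤ 2 := by
    have := sum_nonneg fun i (_ : i ∈ univ) => hhalf i
    rw [sum_sub_distrib, hsum, sum_const, card_univ, nsmul_eq_mul] at this
    linarith
  have hgt : 1 < Fintype.card ι := by
    rcases (univ : Finset ι).eq_empty_or_nonempty with h | h
    · simp [h] at hsum
    · have := sum_lt_sum_of_nonempty h fun i _ => hlt i
      rw [hsum, sum_const, card_univ, nsmul_eq_mul, mul_one] at this
      exact_mod_cast this
  have hcard : Fintype.card ι = 2 := by
    have : Fintype.card ι ≤ 2 := by exact_mod_cast hle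
    omega
  refine ⟨hcard, fun i => ?_⟩
  have hzero : ∑ i, (c i / (c i + 1) - 1 / 2) = 0 := by
    rw [sum_sub_distrib, hsum, sum_const, card_univ, hcard]; norm_num
  have := (sum_eq_zero_iff_of_nonneg fun i _ => hhalf i).mp hzero i (mem_univ i)
  rw [sub_eq_zero, div_eq_iff (hpos i).ne'] at this
  linarith

section Coefficients

variable [DecidableEq ι]

theorem smul_sum_erase_sub_eq_sum_ite {R M : Type*} [Ring R] [AddCommGroup M] [Module R M]
    (x : ι → M) (c : R) (i : ι) :
    c • ∑ j ∈ univ.erase i, x j - x i = ∑ j, (if j = i then -1 else c) • x j := by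
  rw [← add_sum_erase _ _ (mem_univ i), if_pos rfl, neg_one_smul, neg_add_eq_sub, smul_sum]
  exact congrArg (· - x i) (sum_congr rfl fun j hj => by rw [if_neg (ne_of_mem_erase hj)])

theorem linearIndependent_ite_neg_one {K : Type*} [Field K] (c : ι → K)
    (hc : ∀ i, c i + 1 ≠ 0) (hsum : ∑ i, c i / (c i + 1) ≠ 1) :
    LinearIndependent K fun i j => if j = i then (-1 : K) else c i := by
  rw [Fintype.linearIndependent_iff]
  intro g hg
  -- Row `i` is `c i • 𝟙 - (c i + 1) • Pi.single i 1`, so a relation `∑ g i • row i = 0` says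
  -- `g j * (c j + 1) = ∑ g i * c i` for every `j`.
  set t := ∑ i, g i * c i
  have hg_eq : ∀ j, g j = t / (c j + 1) := fun j => by
    have hj := congrFun hg j
    have hsplit : ∀ i, g i * (if j = i then -1 else c i) =
        g i * c i - if j = i then g j * (c j + 1) else 0 := fun i => by
      split_ifs with h
      · subst h; ring
      · ring
    simp only [Finset.sum_apply, Pi.smul_apply, smul_eq_mul, Pi.zero_apply] at hj
    rw [sum_congr rfl fun i _ => hsplit i, sum_sub_distrib, sum_ite_eq, if_pos (mem_univ j)] at hj
    rw [eq_div_iff (hc j)]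
    linear_combination -hj
  have ht : t * (1 - ∑ i, c i / (c i + 1)) = 0 := by
    have : t = ∑ i, t * (c i / (c i + 1)) :=
      sum_congr rfl fun i _ => by rw [hg_eq i]; field_simp [hc i]
    rw [mul_sub, mul_one, mul_sum, ← this, sub_self]
  have ht0 : t = 0 := (mul_eq_zero.mp ht).resolve_right (sub_ne_zero.mpr (Ne.symm hsum))
  intro j
  rw [hg_eq j, ht0, zero_div]

theorem not_forall_lt_sum_erase_of_card_eq_two {M : Type*} [AddCommGroup M] [PartialOrder M]
    [IsOrderedCancelAddMonoid M] (hι : Fintype.card ι = 2) (f : ι → M) :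
    ¬ ∀ i, f i < ∑ j ∈ univ.erase i, f j := by
  intro hf
  have hne : (univ : Finset ι).Nonempty := card_pos.mp (by rw [card_univ, hι]; norm_num)
  have := sum_lt_sum_of_nonempty hne fun i _ => hf i
  simp only [sum_erase_eq_sub (mem_univ _), sum_sub_distrib, sum_const, card_univ, hι,
    two_nsmul, add_sub_cancel_right, lt_self_iff_false] at this

theorem sum_div_add_one_ne_one {c : ι → ℝ} (hc : ∀ i, 1 ≤ c i) (f : ι → ℝ)
    (hf : ∀ i, f i < c i * ∑ j ∈ univ.erase i, f j) : ∑ i, c i / (c i + 1) ≠ 1 := by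
  intro hsum
  obtain ⟨hcard, hone⟩ := card_eq_two_and_eq_one_of_sum_div_add_one_eq_one hc hsum
  exact not_forall_lt_sum_erase_of_card_eq_two hcard f fun i => by simpa [hone i] using hf i

end Coefficients

theorem small_primitive_gaps_general (d : ℕ) (hd : 0 < d) (x : Fin d → Fin d → ℝ)
    (hli : LinearIndependent ℝ x) (hpos : ∀ i j, 0 ≤ x i j)
    (hhyp : ∀ i k, 0 < ∑ j ∈ Finset.univ.erase i, x j k) :
    let L : Set (Fin d → ℝ) := {v | ∃ a : Fin d → ℤ, v = ∑ i, (a i : ℝ) • x i}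
    let S : Set (Fin d → ℝ) := {v | ∃ a : Fin d → ℕ, v = ∑ i, (a i : ℝ) • x i}
    let a : Fin d → ℤ := fun i =>
      (⨆ k : Fin d, ⌊x i k / ∑ j ∈ Finset.univ.erase i, x j k⌋) + 1
    let z : Fin d → Fin d → ℝ := fun i =>
      ((a i : ℝ) • ∑ j ∈ Finset.univ.erase i, x j) - x i
    LinearIndependent ℝ z ∧ ∀ i,
      z i ∈ L ∧ (∀ k, 0 ≤ z i k) ∧ z i ∉ S ∧
        (∀ w ∈ L, ∀ m : ℤ, 1 < m → z i ≠ (m : ℝ) • w) ∧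
        ‖z i‖ = ⨆ m : Fin d, ((a i : ℝ) * ∑ j ∈ Finset.univ.erase i, x j m - x i m) := by
  intro L S a z
  have ha_one : ∀ i, (1 : ℝ) ≤ a i := fun i => by
    exact_mod_cast one_le_ciSup_floor_add_one _ i (div_nonneg (hpos i i) (hhyp i i).le)
  have hlt : ∀ i k, x i k < a i * ∑ j ∈ univ.erase i, x j k := fun i k =>
    (div_lt_iff₀ (hhyp i k)).mp
      (lt_ciSup_floor_add_one (fun k => x i k / ∑ j ∈ univ.erase i, x j k) k)
  have hz : ∀ i, z i = ∑ j, (if j = i then -1 else (a i : ℝ)) • x j := fun i =>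
    smul_sum_erase_sub_eq_sum_ite x _ i
  have hz_int : ∀ i, z i = ∑ j, ((if j = i then -1 else a i : ℤ) : ℝ) • x j := fun i => by
    push_cast [apply_ite]
    exact hz i
  have hz_pos : ∀ i k, 0 < z i k := fun i k => by
    simp only [z, Pi.sub_apply, Pi.smul_apply, Finset.sum_apply, smul_eq_mul]
    linarith [hlt i k]
  refine ⟨?_, fun i => ⟨⟨_, hz_int i⟩, fun k => (hz_pos i k).le, ?_, ?_, ?_⟩⟩
  · have hB := linearIndependent_ite_neg_one (fun i => (a i : ℝ))
      (fun i => by linarith [ha_one i]) (sum_div_add_one_ne_one ha_one _ fun i => hlt i ⟨0, hd⟩)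
    simpa only [← hz] using hli.sum_smul_of_rows hB
  · rintro ⟨n, hn⟩
    exact sum_intCast_smul_ne_sum_natCast_smul hli (i := i) (by simp) n (hz_int i ▸ hn)
  · rintro w ⟨b, rfl⟩ m hm h
    have := isUnit_of_sum_intCast_smul_eq_smul hli (i := i) (by simp) b m (hz_int i ▸ h)
    rcases Int.isUnit_iff.mp this with rfl | rfl <;> omega
  · have : Nonempty (Fin d) := ⟨i⟩
    rw [pi_norm_eq_ciSup_of_nonneg fun k => (hz_pos i k).le]
    simp [z, Finset.sum_apply]

/-- Let `X = {x_1,…,x_d}` be a positive basis of a full-rank lattice `L ⊂ ℝ^d`, not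
orthogonal, and such that no `d-1` of its elements lie in a coordinate hyperplane
(so `∑_{j≠i} x_{jk} > 0` for all `i,k`). With
`a_i = max_k ⌊x_{ik} / ∑_{j≠i} x_{jk}⌋ + 1` and `z_i = a_i ∑_{j≠i} x_j − x_i`, the
`z_1,…,z_d` are linearly independent primitive gaps of `S(X)` in `L⁺`, with sup-norms
`|z_i| = max_m (a_i ∑_{j≠i} x_{jm} − x_{im})`. -/
theorem small_primitive_gaps (d : ℕ) (hd : 0 < d) (x : Fin d → Fin d → ℝ)
    (hli : LinearIndependent ℝ x) (hpos : ∀ i j, 0 ≤ x i j)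
    (hhyp : ∀ i k, 0 < ∑ j ∈ Finset.univ.erase i, x j k)
    (hnotorth : ¬ ∀ i, ∃ j, ∃ c : ℝ, x i = c • (Pi.single j 1 : Fin d → ℝ)) :
    let L : Set (Fin d → ℝ) := {v | ∃ a : Fin d → ℤ, v = ∑ i, (a i : ℝ) • x i}
    let S : Set (Fin d → ℝ) := {v | ∃ a : Fin d → ℕ, v = ∑ i, (a i : ℝ) • x i}
    let a : Fin d → ℤ := fun i =>
      (⨆ k : Fin d, ⌊x i k / ∑ j ∈ Finset.univ.erase i, x j k⌋) + 1
    let z : Fin d → Fin d → ℝ := fun i =>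
      ((a i : ℝ) • ∑ j ∈ Finset.univ.erase i, x j) - x i
    LinearIndependent ℝ z ∧ ∀ i,
      z i ∈ L ∧ (∀ k, 0 ≤ z i k) ∧ z i ∉ S ∧
        (∀ w ∈ L, ∀ m : ℤ, 1 < m → z i ≠ (m : ℝ) • w) ∧
        ‖z i‖ = ⨆ m : Fin d, ((a i : ℝ) * ∑ j ∈ Finset.univ.erase i, x j m - x i m) :=
  small_primitive_gaps_general d hd x hli hpos hhyp
end

section
/- Let Y = {y_1,...,y_d} be linearly independent vectors in R^d with matrix 𝒴, let L ⊂ R^d be a full-rank lattice, M = 𝒴^{-1}L, and L(Y) = L ∩ C(Y) where C(Y) = 𝒴·R^d_{≥0}. Then for each 1 ≤ i ≤ d, λ_i(M⁺)/(d|𝒴^{-1}|) ≤ λ_i(L(Y)) ≤ d|𝒴|·λ_i(M⁺), where |·| denotes the sup-norm of a matrix viewed as a vector in R^{d²}. -/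
/-- The `i`-th successive minimum of a set `S ⊆ ℝ^d` with respect to the unit sup-norm
cube. -/
noncomputable def succMin (d : ℕ) (S : Set (Fin d → ℝ)) (i : ℕ) : ℝ :=
  sInf {t : ℝ | 0 < t ∧ ∃ v : Fin i → (Fin d → ℝ),
    (∀ k, v k ∈ S) ∧ LinearIndependent ℝ v ∧ ∀ k, ‖v k‖ ≤ t}

/-!
Multiplication by `Y` is a linear bijection from `M⁺` onto `L(Y)`, with inverse multiplication
by `Y⁻¹`. An invertible matrix `A` preserves linear independence and stretches sup-norms by at
most `d·|A|`, so pushing a family realising `λ_i` of one set through `A` bounds `λ_i` of its image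
by `d·|A|` times `λ_i` of the set. Applying this to `Y` and to `Y⁻¹` gives the two inequalities.
-/

namespace Matrix

variable {m n : Type*} [Fintype m] [Fintype n]

lemma abs_le_iSup_abs_entry (A : Matrix m n ℝ) (k : m) (j : n) :
    |A k j| ≤ ⨆ p : m × n, |A p.1 p.2| :=
  le_ciSup (f := fun p : m × n => |A p.1 p.2|) (Set.finite_range _).bddAbove (k, j)

lemma iSup_abs_entry_pos {A : Matrix m n ℝ} (hA : A ≠ 0) : 0 < ⨆ p : m × n, |A p.1 p.2| := by
  obtain ⟨k, j, hkj⟩ : ∃ k j, A k j ≠ 0 := by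
    by_contra! h
    exact hA (Matrix.ext h)
  exact (abs_pos.2 hkj).trans_le (abs_le_iSup_abs_entry A k j)

lemma norm_mulVec_le_card_mul_iSup_abs_entry (A : Matrix m n ℝ) (x : n → ℝ) :
    ‖A *ᵥ x‖ ≤ (Fintype.card n * ⨆ p : m × n, |A p.1 p.2|) * ‖x‖ := by
  have hA : 0 ≤ ⨆ p : m × n, |A p.1 p.2| := Real.iSup_nonneg fun _ => abs_nonneg _
  refine (pi_norm_le_iff_of_nonneg (by positivity)).2 fun k => ?_
  calc ‖(A *ᵥ x) k‖ = |∑ j, A k j * x j| := rfl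
    _ ≤ ∑ j, |A k j| * |x j| := by
        simpa only [abs_mul] using Finset.abs_sum_le_sum_abs (fun j => A k j * x j) _
    _ ≤ ∑ _j : n, (⨆ p : m × n, |A p.1 p.2|) * ‖x‖ :=
        Finset.sum_le_sum fun j _ =>
          mul_le_mul (abs_le_iSup_abs_entry A k j) (norm_le_pi_norm x j) (abs_nonneg _) hA
    _ = (Fintype.card n * ⨆ p : m × n, |A p.1 p.2|) * ‖x‖ := by
        rw [Finset.sum_const, Finset.card_univ, nsmul_eq_mul, mul_assoc]

lemma ne_zero_of_isUnit_det [DecidableEq n] [Nonempty n] {A : Matrix n n ℝ} (hA : IsUnit A.det) :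
    A ≠ 0 := by
  rintro rfl
  simp at hA

lemma natCast_mul_iSup_abs_entry_pos {d : ℕ} (hd : 0 < d) {A : Matrix (Fin d) (Fin d) ℝ}
    (hA : IsUnit A.det) : 0 < (d : ℝ) * ⨆ p : Fin d × Fin d, |A p.1 p.2| :=
  have : Nonempty (Fin d) := Fin.pos_iff_nonempty.1 hd
  mul_pos (Nat.cast_pos.2 hd) (iSup_abs_entry_pos (ne_zero_of_isUnit_det hA))

end Matrix

section SuccessiveMinima

open scoped Pointwise

variable {d i : ℕ}

def succMinCandidates (d : ℕ) (S : Set (Fin d → ℝ)) (i : ℕ) : Set ℝ :=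
  {t : ℝ | 0 < t ∧ ∃ v : Fin i → (Fin d → ℝ),
    (∀ k, v k ∈ S) ∧ LinearIndependent ℝ v ∧ ∀ k, ‖v k‖ ≤ t}

lemma succMin_eq_sInf (S : Set (Fin d → ℝ)) :
    succMin d S i = sInf (succMinCandidates d S i) := rfl

lemma succMinCandidates_nonempty_iff {S : Set (Fin d → ℝ)} :
    (succMinCandidates d S i).Nonempty ↔
      ∃ v : Fin i → (Fin d → ℝ), (∀ k, v k ∈ S) ∧ LinearIndependent ℝ v := by
  constructor
  · rintro ⟨_, _, v, hvS, hv, _⟩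
    exact ⟨v, hvS, hv⟩
  · rintro ⟨v, hvS, hv⟩
    exact ⟨‖v‖ + 1, by positivity, v, hvS, hv, fun k => (norm_le_pi_norm v k).trans (by linarith)⟩

lemma smul_succMinCandidates_subset_image (e : (Fin d → ℝ) ≃ₗ[ℝ] (Fin d → ℝ)) {C : ℝ}
    (hC : 0 < C) (he : ∀ x, ‖e x‖ ≤ C * ‖x‖) (S : Set (Fin d → ℝ)) :
    C • succMinCandidates d S i ⊆ succMinCandidates d (e '' S) i := by
  rintro _ ⟨t, ⟨ht, v, hvS, hv, hvt⟩, rfl⟩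
  refine ⟨mul_pos hC ht, e ∘ v, fun k => Set.mem_image_of_mem e (hvS k),
    hv.map' e.toLinearMap e.ker, fun k => ?_⟩
  exact (he (v k)).trans (mul_le_mul_of_nonneg_left (hvt k) hC.le)

lemma succMinCandidates_image_eq_empty (e : (Fin d → ℝ) ≃ₗ[ℝ] (Fin d → ℝ))
    {S : Set (Fin d → ℝ)} (hS : succMinCandidates d S i = ∅) :
    succMinCandidates d (e '' S) i = ∅ := by
  rw [← Set.not_nonempty_iff_eq_empty, succMinCandidates_nonempty_iff] at hS ⊢
  rintro ⟨v, hvS, hv⟩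
  refine hS ⟨e.symm ∘ v, fun k => ?_, hv.map' e.symm.toLinearMap e.symm.ker⟩
  obtain ⟨x, hx, hxv⟩ := hvS k
  simpa only [Function.comp_apply, ← hxv, e.symm_apply_apply] using hx

lemma succMin_image_le (e : (Fin d → ℝ) ≃ₗ[ℝ] (Fin d → ℝ)) {C : ℝ} (hC : 0 < C)
    (he : ∀ x, ‖e x‖ ≤ C * ‖x‖) (S : Set (Fin d → ℝ)) :
    succMin d (e '' S) i ≤ C * succMin d S i := by
  rw [succMin_eq_sInf, succMin_eq_sInf]
  rcases (succMinCandidates d S i).eq_empty_or_nonempty with hS | hS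
  · simp [hS, succMinCandidates_image_eq_empty e hS]
  · rw [← smul_eq_mul, ← Real.sInf_smul_of_nonneg hC.le]
    exact csInf_le_csInf ⟨0, fun t ht => ht.1.le⟩ hS.smul_set
      (smul_succMinCandidates_subset_image e hC he S)

lemma succMin_mulVec_image_le (hd : 0 < d) {A : Matrix (Fin d) (Fin d) ℝ} (hA : IsUnit A.det)
    (S : Set (Fin d → ℝ)) :
    succMin d (A.mulVec '' S) i ≤ (d * ⨆ p : Fin d × Fin d, |A p.1 p.2|) * succMin d S i := by
  let e := A.toLinearEquiv' (A.invertibleOfIsUnitDet hA)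
  have he : ⇑e = A.mulVec := rfl
  rw [← he]
  exact succMin_image_le e (A.natCast_mul_iSup_abs_entry_pos hd hA) (fun x => by
    simpa only [he, Fintype.card_fin] using A.norm_mulVec_le_card_mul_iSup_abs_entry x) S

end SuccessiveMinima

theorem successive_minima_general_cone_general (d : ℕ) (hd : 0 < d)
    (Y : Matrix (Fin d) (Fin d) ℝ) (hY : IsUnit Y.det)
    (B : Matrix (Fin d) (Fin d) ℝ)
    (i : ℕ) :
    let L : Set (Fin d → ℝ) := {v | ∃ a : Fin d → ℤ, v = B.mulVec (fun j => (a j : ℝ))}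
    let M : Set (Fin d → ℝ) := {v | ∃ w ∈ L, v = Y⁻¹.mulVec w}
    let LY : Set (Fin d → ℝ) :=
      {v ∈ L | ∃ c : Fin d → ℝ, (∀ k, 0 ≤ c k) ∧ v = Y.mulVec c}
    let Mplus : Set (Fin d → ℝ) := {v ∈ M | ∀ k, 0 ≤ v k}
    let nY : ℝ := ⨆ p : Fin d × Fin d, |Y p.1 p.2|
    let nYinv : ℝ := ⨆ p : Fin d × Fin d, |Y⁻¹ p.1 p.2|
    succMin d Mplus i / (d * nYinv) ≤ succMin d LY i ∧
      succMin d LY i ≤ d * nY * succMin d Mplus i := by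
  intro L M LY Mplus nY nYinv
  have hYY : ∀ x, Y.mulVec (Y⁻¹.mulVec x) = x := fun x => by
    rw [Matrix.mulVec_mulVec, Matrix.mul_nonsing_inv Y hY, Matrix.one_mulVec]
  have hYinvY : ∀ x, Y⁻¹.mulVec (Y.mulVec x) = x := fun x => by
    rw [Matrix.mulVec_mulVec, Matrix.nonsing_inv_mul Y hY, Matrix.one_mulVec]
  have hLY : LY = Y.mulVec '' Mplus := by
    ext v
    constructor
    · rintro ⟨hvL, c, hc, rfl⟩
      exact ⟨c, ⟨⟨Y.mulVec c, hvL, (hYinvY c).symm⟩, hc⟩, rfl⟩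
    · rintro ⟨_, ⟨⟨w, hwL, rfl⟩, hw⟩, rfl⟩
      exact ⟨(hYY w).symm ▸ hwL, Y⁻¹.mulVec w, hw, rfl⟩
  have hMplus : Mplus = Y⁻¹.mulVec '' LY := by
    rw [hLY, Set.image_image]
    simp only [hYinvY, Set.image_id']
  have hYinv : IsUnit Y⁻¹.det := Y.isUnit_nonsing_inv_det hY
  constructor
  · rw [div_le_iff₀ (Y⁻¹.natCast_mul_iSup_abs_entry_pos hd hYinv), mul_comm, hMplus]
    exact succMin_mulVec_image_le hd hYinv LY
  · rw [hLY]
    exact succMin_mulVec_image_le hd hY Mplus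

/-- Let `Y ∈ GL_d(ℝ)`, `L = B·ℤ^d` a full-rank lattice, `M = Y⁻¹L` and
`L(Y) = L ∩ Y·ℝ^d_{≥0}`. Then for each `1 ≤ i ≤ d`,
`λ_i(M⁺)/(d·|Y⁻¹|) ≤ λ_i(L(Y)) ≤ d·|Y|·λ_i(M⁺)`, where `|·|` is the sup-norm of a
matrix viewed as a vector in `ℝ^{d²}`. -/
theorem successive_minima_general_cone (d : ℕ) (hd : 0 < d)
    (Y : Matrix (Fin d) (Fin d) ℝ) (hY : IsUnit Y.det)
    (B : Matrix (Fin d) (Fin d) ℝ) (hB : IsUnit B.det)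
    (i : ℕ) (hi1 : 1 ≤ i) (hid : i ≤ d) :
    let L : Set (Fin d → ℝ) := {v | ∃ a : Fin d → ℤ, v = B.mulVec (fun j => (a j : ℝ))}
    let M : Set (Fin d → ℝ) := {v | ∃ w ∈ L, v = Y⁻¹.mulVec w}
    let LY : Set (Fin d → ℝ) :=
      {v ∈ L | ∃ c : Fin d → ℝ, (∀ k, 0 ≤ c k) ∧ v = Y.mulVec c}
    let Mplus : Set (Fin d → ℝ) := {v ∈ M | ∀ k, 0 ≤ v k}
    let nY : ℝ := ⨆ p : Fin d × Fin d, |Y p.1 p.2|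
    let nYinv : ℝ := ⨆ p : Fin d × Fin d, |Y⁻¹ p.1 p.2|
    succMin d Mplus i / (d * nYinv) ≤ succMin d LY i ∧
      succMin d LY i ≤ d * nY * succMin d Mplus i :=
  successive_minima_general_cone_general d hd Y hY B i
end

section
/- Let K be a totally real number field of degree d ≥ 2, I ⊆ O_K a nonzero ideal, and β_1,...,β_d ∈ I⁺ a Z-basis of I consisting of totally nonnegative elements. Then this basis cannot be orthogonal under the Minkowski embedding; i.e., it is impossible for each vector Σ(β_i) = (σ_1(β_i),...,σ_d(β_i)) to be a multiple of a standard basis vector. Consequently, the set of gaps I⁺ \ S(β) is infinite. -/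
open NumberField

/-- Let `K` be a totally real number field of degree `d ≥ 2` with real embeddings
`σ_1,…,σ_d`, `I ⊆ 𝒪_K` a nonzero ideal and `β_1,…,β_d ∈ I⁺` a `ℤ`-basis of `I`
consisting of totally nonnegative elements. Then this basis is not orthogonal under the
Minkowski embedding — no `Σ(β_i)` can be a multiple of a standard basis vector — and
consequently the set of gaps `I⁺ \ S(β)` is infinite. -/
theorem positive_basis_not_orthogonal (K : Type*) [Field K] [NumberField K]
    (hd : 2 ≤ Module.finrank ℚ K)
    (σ : Fin (Module.finrank ℚ K) → (K →+* ℝ)) (hσ : Function.Injective σ)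
    (I : Ideal (𝓞 K)) (hI : I ≠ ⊥)
    (β : Fin (Module.finrank ℚ K) → 𝓞 K)
    (hβI : ∀ i, β i ∈ I) (hβpos : ∀ i j, 0 ≤ σ j (β i : K))
    (hspan : ∀ γ ∈ I, ∃ a : Fin (Module.finrank ℚ K) → ℤ, γ = ∑ i, a i • β i)
    (hβli : LinearIndependent ℚ (fun i => (β i : K))) :
    (¬ ∀ i, ∃ j, ∃ c : ℝ, (fun k => σ k (β i : K)) =
        c • (Pi.single j 1 : Fin (Module.finrank ℚ K) → ℝ)) ∧
      Set.Infinite {γ : 𝓞 K | (γ ∈ I ∧ ∀ j, 0 ≤ σ j (γ : K)) ∧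
        ¬ ∃ c : Fin (Module.finrank ℚ K) → ℕ, γ = ∑ i, c i • β i} := by
  have hne : ∀ i, (β i : K) ≠ 0 := fun i => hβli.ne_zero i
  have hpos : ∀ i j, 0 < σ j (β i : K) := by
    intro i j
    rcases (hβpos i j).lt_or_eq with h | h
    · exact h
    · exact absurd ((σ j).injective (by simpa using h.symm)) (hne i)
  let i0 : Fin (Module.finrank ℚ K) := ⟨0, by omega⟩
  let i1 : Fin (Module.finrank ℚ K) := ⟨1, by omega⟩
  have hi01 : i0 ≠ i1 := by simp [i0, i1, Fin.ext_iff]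
  constructor
  · intro h
    obtain ⟨j, c, hc⟩ := h i0
    obtain ⟨k, hk⟩ : ∃ k : Fin (Module.finrank ℚ K), k ≠ j := by
      by_cases hj : j = i0
      · exact ⟨i1, by simp [hj, Ne.symm hi01]⟩
      · exact ⟨i0, fun h => hj h.symm⟩
    have hck := congrFun hc k
    simp only [Pi.smul_apply, Pi.single_apply, if_neg hk, smul_zero] at hck
    exact (hpos i0 k).ne' hck
  · -- the set of gaps is infinite
    set Nf : Fin (Module.finrank ℚ K) → ℕ :=
      fun j => ⌈σ j (β i0 : K) / σ j (β i1 : K)⌉₊ with hNf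
    set N₀ : ℕ := Finset.univ.sup Nf with hN₀
    set f : ℕ → 𝓞 K := fun n => (N₀ + n) • β i1 - β i0 with hf
    have hfK : ∀ n, ((f n : 𝓞 K) : K)
        = ((N₀ + n : ℕ) : ℚ) • (β i1 : K) - (β i0 : K) := by
      intro n
      simp only [hf]
      rw [Nat.cast_smul_eq_nsmul]
      push_cast
      rfl
    refine Set.infinite_of_injective_forall_mem (f := f) ?_ ?_
    · intro a b hab
      have h1 : ((f a : 𝓞 K) : K) = ((f b : 𝓞 K) : K) := by rw [hab]
      rw [hfK a, hfK b, sub_left_inj] at h1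
      have h2 := smul_left_injective ℚ (hne i1) h1
      have h3 : (N₀ + a : ℕ) = (N₀ + b : ℕ) := by exact_mod_cast h2
      omega
    · intro n
      refine ⟨⟨?_, ?_⟩, ?_⟩
      · exact sub_mem (nsmul_mem (hβI i1) _) (hβI i0)
      · intro j
        rw [hfK n, map_sub, Nat.cast_smul_eq_nsmul, map_nsmul, nsmul_eq_mul]
        have hle : σ j (β i0 : K) / σ j (β i1 : K) ≤ ((N₀ + n : ℕ) : ℝ) := by
          calc σ j (β i0 : K) / σ j (β i1 : K) ≤ (Nf j : ℝ) := Nat.le_ceil _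
          _ ≤ ((N₀ + n : ℕ) : ℝ) := by
              have : Nf j ≤ N₀ + n :=
                le_trans (Finset.le_sup (Finset.mem_univ j)) (by omega)
              exact_mod_cast this
        rw [div_le_iff₀ (hpos i1 j)] at hle
        linarith
      · rintro ⟨c, hc⟩
        have hK : ((f n : 𝓞 K) : K) = ∑ i, (c i : ℚ) • (β i : K) := by
          rw [hc]
          push_cast [Nat.cast_smul_eq_nsmul]
          rfl
        have hmain : ∑ i, (((c i : ℚ) + (if i = i0 then 1 else 0)
            - (if i = i1 then ((N₀ + n : ℕ) : ℚ) else 0)) • (β i : K)) = 0 := by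
          have h1 := hK
          rw [hfK n] at h1
          simp only [add_smul, sub_smul, Finset.sum_add_distrib, Finset.sum_sub_distrib,
            ite_smul, zero_smul, Finset.sum_ite_eq', Finset.mem_univ, if_true, one_smul]
          rw [← h1]
          ring
        have hz := Fintype.linearIndependent_iff.mp hβli _ hmain i0
        simp only [if_pos rfl, if_neg hi01, if_true, sub_zero] at hz
        have hc0 : (0:ℚ) ≤ (c i0 : ℚ) := by positivity
        linarith
end
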